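/- arXiv:2603.09563 — 2 statements merged into one kernel-verified Lean document; each statement's English description precedes it below -/
import Mathlib

section
/- Let G be the chain (path graph) on n ≥ 3 vertices. For every undirected graph G' on the same vertex set with G' ≠ G, the number of triples (x, y, S) on which the separation relations of G and G' differ is at least 2^(n-2) - 1; moreover this bound is attained by some G' obtained from G by adding a single edge. -/
/-- `S` separates `u` and `v` in `G`: every `u`–`v` walk contains a vertex of `S`
(with `S` disjoint from `{u, v}`, such a vertex is internal). -/
def Separates {n : ℕ} (G : SimpleGraph (Fin n)) (u v : Fin n) (S : Finset (Fin n)) : Prop :=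
  ∀ p : G.Walk u v, ∃ w ∈ p.support, w ∈ S

/-- The separation distance between two graphs on `Fin n`: the number of triples
`(x, y, S)` with `x < y` (so each unordered pair is counted once) and
`S ⊆ V \ {x, y}` on which the separation relations of the two graphs differ. -/
noncomputable def sepDist {n : ℕ} (G₁ G₂ : SimpleGraph (Fin n)) : ℕ :=
  Set.ncard {t : Fin n × Fin n × Finset (Fin n) |
    t.1 < t.2.1 ∧ t.1 ∉ t.2.2 ∧ t.2.1 ∉ t.2.2 ∧
    ¬ (Separates G₁ t.1 t.2.1 t.2.2 ↔ Separates G₂ t.1 t.2.1 t.2.2)}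

/-!
Write `P` for the path. A graph `G ≠ P` either has a cut `{v ≤ x} | {v ≥ x + 1}` crossed by no
edge, or an edge `ab` with `b ≥ a + 2`. A cut separates `x` from `x + 1` in `G` by every `S`, while
`P` never does: `2 ^ (n - 2)` triples. Two such long edges `ab` each give the `2 ^ (n - 3)` triples
`(a, b, S)` with `a + 1 ∈ S`, separated in `P` but never in `G`. If `ab` is the only long edge,
every path edge outside `[a, b]` lies in `G` (otherwise the cut there needs a second long edge),
and for nonempty `W₁ ⊆ [0, a]`, `W₂ ⊆ (a, b)`, `W₃ ⊆ [b, n)` the triple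
`(max W₁, min W₃, (W₁ ∪ W₂ ∪ W₃) \ {max W₁, min W₃})` is separated in `P` but not in `G`; there
are `(2 ^ p - 1) (2 ^ q - 1) (2 ^ r - 1) ≥ 2 ^ (p + q + r - 2) - 1` of them, where `p`, `q`, `r`
are the sizes of the three blocks and `p + q + r = n`.

For `P + {0, 2}` a differing triple is `(0, y, S)` with `1 ∈ S` and `S ∩ [2, y] = ∅`, and it is
determined by the nonempty set `{y} ∪ (S \ {1}) ⊆ [2, n)`.
-/

open SimpleGraph Finset

variable {n : ℕ}

section Separation

variable {G H : SimpleGraph (Fin n)} {x y z : Fin n} {S : Finset (Fin n)}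

theorem Separates.anti (hle : G ≤ H) (h : Separates H x y S) : Separates G x y S := by
  intro p
  obtain ⟨w, hw, hwS⟩ := h (p.mapLe hle)
  exact ⟨w, by simpa [Walk.mapLe] using hw, hwS⟩

theorem not_separates_of_adj (h : G.Adj x y) (hx : x ∉ S) (hy : y ∉ S) :
    ¬ Separates G x y S := by
  intro hsep
  obtain ⟨w, hw, hwS⟩ := hsep h.toWalk
  simp only [Adj.toWalk, Walk.support_cons, Walk.support_nil, List.mem_cons,
    List.not_mem_nil, or_false] at hw
  rcases hw with rfl | rfl <;> contradiction

theorem separates_of_forall_adj_mem (hxz : x < z) (hzy : z ≤ y)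
    (h : ∀ u v, G.Adj u v → u < z → z ≤ v → v ∈ S) : Separates G x y S := by
  intro p
  obtain ⟨d, hd, hd₁, hd₂⟩ := p.exists_boundary_dart {w | w < z} hxz (not_lt.mpr hzy)
  exact ⟨d.snd, p.dart_snd_mem_support_of_mem_darts hd, h _ _ d.adj hd₁ (not_lt.mp hd₂)⟩

theorem exists_walk_of_forall_adj_succ (hxy : x ≤ y)
    (h : ∀ u v : Fin n, x ≤ u → v ≤ y → u.val + 1 = v.val → G.Adj u v) :
    ∃ p : G.Walk x y, ∀ w ∈ p.support, x ≤ w ∧ w ≤ y := by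
  induction hk : y.val - x.val generalizing y with
  | zero =>
    obtain rfl : x = y := by omega
    exact ⟨.nil, by simp⟩
  | succ k ih =>
    let y' : Fin n := ⟨y.val - 1, by omega⟩
    obtain ⟨p, hp⟩ := ih (y := y') (by simp only [y', Fin.le_def]; omega)
      (fun u v hu hv huv => h u v hu (by simp only [y', Fin.le_def] at hv ⊢; omega) huv)
      (by simp only [y']; omega)
    refine ⟨p.concat (h y' y (by simp only [y', Fin.le_def]; omega) le_rfl
      (by simp only [y']; omega)), fun w hw => ?_⟩
    rw [Walk.support_concat, List.mem_append, List.mem_singleton] at hw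
    rcases hw with hw | rfl
    · have := hp w hw
      simp only [y', Fin.le_def] at this ⊢
      omega
    · exact ⟨hxy, le_rfl⟩

theorem separates_pathGraph_iff (hxy : x < y) (hx : x ∉ S) (hy : y ∉ S) :
    Separates (pathGraph n) x y S ↔ ∃ z ∈ S, x < z ∧ z < y := by
  constructor
  · intro hsep
    obtain ⟨p, hp⟩ := exists_walk_of_forall_adj_succ (G := pathGraph n) hxy.le
      fun u v _ _ huv => pathGraph_adj.mpr (Or.inl huv)
    obtain ⟨w, hw, hwS⟩ := hsep p
    have hwx : w ≠ x := by rintro rfl; exact hx hwS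
    have hwy : w ≠ y := by rintro rfl; exact hy hwS
    exact ⟨w, hwS, lt_of_le_of_ne (hp w hw).1 hwx.symm, lt_of_le_of_ne (hp w hw).2 hwy⟩
  · rintro ⟨z, hz, hxz, hzy⟩
    refine separates_of_forall_adj_mem hxz hzy.le fun u v huv hu hv => ?_
    obtain rfl : v = z := by rw [pathGraph_adj] at huv; omega
    exact hz

end Separation

section Counting

variable {G₁ G₂ : SimpleGraph (Fin n)}

def sepDiff (G₁ G₂ : SimpleGraph (Fin n)) : Set (Fin n × Fin n × Finset (Fin n)) :=
  {t | t.1 < t.2.1 ∧ t.1 ∉ t.2.2 ∧ t.2.1 ∉ t.2.2 ∧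
    ¬ (Separates G₁ t.1 t.2.1 t.2.2 ↔ Separates G₂ t.1 t.2.1 t.2.2)}

theorem sepDist_eq_ncard_sepDiff : sepDist G₁ G₂ = (sepDiff G₁ G₂).ncard := rfl

theorem mk_mem_sepDiff {x y : Fin n} {S : Finset (Fin n)} :
    (x, y, S) ∈ sepDiff G₁ G₂ ↔
      x < y ∧ x ∉ S ∧ y ∉ S ∧ ¬ (Separates G₁ x y S ↔ Separates G₂ x y S) := Iff.rfl

theorem card_le_sepDist {F : Finset (Fin n × Fin n × Finset (Fin n))}
    (hF : ↑F ⊆ sepDiff G₁ G₂) : F.card ≤ sepDist G₁ G₂ := by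
  simpa [sepDist_eq_ncard_sepDiff] using Set.ncard_le_ncard hF

theorem card_powerset_erase_empty {α : Type*} [DecidableEq α] (s : Finset α) :
    (s.powerset.erase ∅).card = 2 ^ s.card - 1 := by
  rw [card_erase_of_mem (empty_mem_powerset s), card_powerset]

theorem two_pow_sub_one_le_mul {p q : ℕ} (hp : 1 ≤ p) (hq : 1 ≤ q) :
    2 ^ (p + q - 1) - 1 ≤ (2 ^ p - 1) * (2 ^ q - 1) := by
  obtain ⟨p, rfl⟩ := Nat.exists_eq_add_of_le' hp
  obtain ⟨q, rfl⟩ := Nat.exists_eq_add_of_le' hq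
  have hu : 1 ≤ 2 ^ p := Nat.one_le_two_pow
  have hv : 1 ≤ 2 ^ q := Nat.one_le_two_pow
  rw [show p + 1 + (q + 1) - 1 = p + q + 1 by omega, pow_succ, pow_add, pow_succ, pow_succ]
  zify [hu, hv, Nat.one_le_two_pow (n := p + q),
    show 1 ≤ 2 ^ p * 2 ^ q * 2 from by nlinarith,
    show 1 ≤ 2 ^ p * 2 from by omega, show 1 ≤ 2 ^ q * 2 from by omega]
  nlinarith

end Counting

section LowerBound

variable {G : SimpleGraph (Fin n)}

theorem two_pow_le_sepDist_of_cut {x y : Fin n} (hxy : x.val + 1 = y.val)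
    (hcut : ∀ u v, u ≤ x → y ≤ v → ¬ G.Adj u v) : 2 ^ (n - 2) ≤ sepDist (pathGraph n) G := by
  have hne : x ≠ y := by rintro rfl; omega
  have hsub : ↑(({x, y}ᶜ : Finset (Fin n)).powerset.image fun S => (x, y, S)) ⊆
      sepDiff (pathGraph n) G := by
    simp only [coe_image, Set.image_subset_iff]
    intro S hS
    have hx : x ∉ S := fun h => by simpa using mem_powerset.mp hS h
    have hy : y ∉ S := fun h => by simpa using mem_powerset.mp hS h
    refine mk_mem_sepDiff.mpr ⟨by omega, hx, hy, fun h => ?_⟩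
    refine not_separates_of_adj (pathGraph_adj.mpr (Or.inl hxy)) hx hy (h.mpr ?_)
    exact separates_of_forall_adj_mem (z := y) (by omega) le_rfl
      fun u v huv hu hv => absurd huv (hcut u v (by omega) hv)
  calc 2 ^ (n - 2) = _ := by
        rw [card_image_of_injective _ fun _ _ h => by simpa using h, card_powerset,
          card_compl, card_pair hne, Fintype.card_fin]
    _ ≤ _ := card_le_sepDist hsub

def edgeTriples (a b c : Fin n) : Finset (Fin n × Fin n × Finset (Fin n)) :=
  ({a, b, c}ᶜ : Finset (Fin n)).powerset.image fun T => (a, b, insert c T)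

theorem card_edgeTriples {a b c : Fin n} (hac : a < c) (hcb : c < b) :
    (edgeTriples a b c).card = 2 ^ (n - 3) := by
  rw [edgeTriples, card_image_of_injOn, card_powerset, card_compl, Fintype.card_fin,
    card_insert_of_notMem (by simp; omega), card_pair (by omega)]
  intro T hT T' hT' h
  simp only [coe_powerset, Set.mem_preimage, Set.mem_powerset_iff, coe_compl] at hT hT'
  have hc : c ∉ T := fun hc => by simpa using hT hc
  have hc' : c ∉ T' := fun hc => by simpa using hT' hc
  rw [← erase_insert hc, ← erase_insert hc', show insert c T = insert c T' by simpa using h]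

theorem edgeTriples_subset_sepDiff {a b c : Fin n} (h : G.Adj a b) (hac : a < c) (hcb : c < b) :
    ↑(edgeTriples a b c) ⊆ sepDiff (pathGraph n) G := by
  simp only [edgeTriples, coe_image, Set.image_subset_iff]
  intro T hT
  have ha : a ∉ insert c T := by
    simp only [mem_insert, not_or]; exact ⟨hac.ne, fun ha => by simpa using mem_powerset.mp hT ha⟩
  have hb : b ∉ insert c T := by
    simp only [mem_insert, not_or]; exact ⟨hcb.ne', fun hb => by simpa using mem_powerset.mp hT hb⟩
  have hP : Separates (pathGraph n) a b (insert c T) :=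
    (separates_pathGraph_iff (hac.trans hcb) ha hb).mpr ⟨c, mem_insert_self c T, hac, hcb⟩
  exact mk_mem_sepDiff.mpr ⟨hac.trans hcb, ha, hb,
    fun hiff => not_separates_of_adj h ha hb (hiff.mp hP)⟩

theorem two_pow_le_sepDist_of_two_long_edges {a b a' b' : Fin n} (h : G.Adj a b)
    (h' : G.Adj a' b') (hab : a.val + 2 ≤ b.val) (hab' : a'.val + 2 ≤ b'.val)
    (hne : (a, b) ≠ (a', b')) : 2 ^ (n - 2) ≤ sepDist (pathGraph n) G := by
  let c : Fin n := ⟨a.val + 1, by omega⟩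
  let c' : Fin n := ⟨a'.val + 1, by omega⟩
  have hac : a < c := by simp only [c, Fin.lt_def]; omega
  have hcb : c < b := by simp only [c, Fin.lt_def]; omega
  have hac' : a' < c' := by simp only [c', Fin.lt_def]; omega
  have hcb' : c' < b' := by simp only [c', Fin.lt_def]; omega
  have hdisj : Disjoint (edgeTriples a b c) (edgeTriples a' b' c') := by
    simp only [edgeTriples, Finset.disjoint_left, mem_image]
    rintro _ ⟨T, -, rfl⟩ ⟨T', -, h⟩
    simp only [Prod.mk.injEq] at h
    exact hne (by rw [h.1, h.2.1])
  calc 2 ^ (n - 2) = (edgeTriples a b c ∪ edgeTriples a' b' c').card := by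
        rw [card_union_of_disjoint hdisj, card_edgeTriples hac hcb,
          card_edgeTriples hac' hcb', ← two_mul, ← pow_succ']
        congr 1
        omega
    _ ≤ _ := card_le_sepDist <| by
        rw [coe_union]
        exact Set.union_subset (edgeTriples_subset_sepDiff h hac hcb)
          (edgeTriples_subset_sepDiff h' hac' hcb')

/-- The junk value `d` stands for the maximum or minimum of an empty set. -/
def blockTriple (d : Fin n) (W : Finset (Fin n) × Finset (Fin n) × Finset (Fin n)) :
    Fin n × Fin n × Finset (Fin n) :=
  (W.1.max.unbotD d, W.2.2.min.untopD d,
    (W.1 ∪ W.2.1 ∪ W.2.2) \ {W.1.max.unbotD d, W.2.2.min.untopD d})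

theorem blockTriple_eq (d : Fin n) {W : Finset (Fin n) × Finset (Fin n) × Finset (Fin n)}
    (h₁ : W.1.Nonempty) (h₃ : W.2.2.Nonempty) :
    blockTriple d W = (W.1.max' h₁, W.2.2.min' h₃,
      (W.1 ∪ W.2.1 ∪ W.2.2) \ {W.1.max' h₁, W.2.2.min' h₃}) := by
  simp only [blockTriple, ← coe_max' h₁, ← coe_min' h₃, WithBot.unbotD_coe, WithTop.untopD_coe]

def blockFamilies (a b : Fin n) : Finset (Finset (Fin n) × Finset (Fin n) × Finset (Fin n)) :=
  (Iic a).powerset.erase ∅ ×ˢ (Ioo a b).powerset.erase ∅ ×ˢ (Ici b).powerset.erase ∅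

theorem mem_blockFamilies {a b : Fin n} {W : Finset (Fin n) × Finset (Fin n) × Finset (Fin n)} :
    W ∈ blockFamilies a b ↔ W.1 ⊆ Iic a ∧ W.2.1 ⊆ Ioo a b ∧ W.2.2 ⊆ Ici b ∧
      W.1.Nonempty ∧ W.2.1.Nonempty ∧ W.2.2.Nonempty := by
  simp only [blockFamilies, mem_product, mem_erase, mem_powerset, nonempty_iff_ne_empty]
  tauto

theorem card_blockFamilies (a b : Fin n) : (blockFamilies a b).card =
    (2 ^ (a.val + 1) - 1) * ((2 ^ (b - a - 1 : ℕ) - 1) * (2 ^ (n - b) - 1)) := by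
  simp only [blockFamilies, card_product, card_powerset_erase_empty, Fin.card_Iic, Fin.card_Ioo,
    Fin.card_Ici]

theorem union_inter_blocks {a b : Fin n} {W₁ W₂ W₃ : Finset (Fin n)} (hab : a < b)
    (h₁ : W₁ ⊆ Iic a) (h₂ : W₂ ⊆ Ioo a b) (h₃ : W₃ ⊆ Ici b) :
    (W₁ ∪ W₂ ∪ W₃) ∩ Iic a = W₁ ∧ (W₁ ∪ W₂ ∪ W₃) ∩ Ioo a b = W₂ ∧
      (W₁ ∪ W₂ ∪ W₃) ∩ Ici b = W₃ := by
  simp only [subset_iff, mem_Iic, mem_Ioo, mem_Ici] at h₁ h₂ h₃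
  refine ⟨?_, ?_, ?_⟩ <;> ext z <;> simp only [mem_inter, mem_union, mem_Iic, mem_Ioo, mem_Ici] <;>
    grind

theorem injOn_blockTriple {a b : Fin n} (hab : a < b) :
    Set.InjOn (blockTriple a) (blockFamilies a b) := by
  intro W hW W' hW' hWW'
  obtain ⟨h₁, h₂, h₃, hW₁, -, hW₃⟩ := mem_blockFamilies.mp hW
  obtain ⟨h₁', h₂', h₃', hW₁', -, hW₃'⟩ := mem_blockFamilies.mp hW'
  rw [blockTriple_eq a hW₁ hW₃, blockTriple_eq a hW₁' hW₃', Prod.mk.injEq, Prod.mk.injEq]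
    at hWW'
  obtain ⟨hx, hy, hS⟩ := hWW'
  have hpair : ∀ {U : Finset (Fin n)} {x y : Fin n}, x ∈ U → y ∈ U →
      {x, y} ∪ U \ {x, y} = U :=
    fun hx hy => union_sdiff_of_subset (insert_subset hx (singleton_subset_iff.mpr hy))
  have hU : W.1 ∪ W.2.1 ∪ W.2.2 = W'.1 ∪ W'.2.1 ∪ W'.2.2 := by
    rw [← hpair (mem_union_left _ (mem_union_left _ (max'_mem _ hW₁)))
        (mem_union_right _ (min'_mem _ hW₃)),
      ← hpair (mem_union_left _ (mem_union_left _ (max'_mem _ hW₁')))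
        (mem_union_right _ (min'_mem _ hW₃')), hS, hx, hy]
  obtain ⟨e₁, e₂, e₃⟩ := union_inter_blocks hab h₁ h₂ h₃
  obtain ⟨e₁', e₂', e₃'⟩ := union_inter_blocks hab h₁' h₂' h₃'
  rw [hU] at e₁ e₂ e₃
  exact Prod.ext (e₁.symm.trans e₁') (Prod.ext (e₂.symm.trans e₂') (e₃.symm.trans e₃'))

/-- The walk `x → a → b → y` uses only path edges outside `[a, b]` and the edge `ab`, and
avoids the separator because `x = max W₁` and `y = min W₃`. -/
theorem blockTriple_mem_sepDiff {a b x y : Fin n} {W₁ W₂ W₃ : Finset (Fin n)} (h : G.Adj a b)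
    (hpath : ∀ u v : Fin n, u.val + 1 = v.val → (v ≤ a ∨ b ≤ u) → G.Adj u v)
    (h₁ : W₁ ⊆ Iic a) (h₂ : W₂ ⊆ Ioo a b) (h₃ : W₃ ⊆ Ici b) (hW₂ : W₂.Nonempty)
    (hx : x ∈ W₁) (hx_max : ∀ w ∈ W₁, w ≤ x) (hy : y ∈ W₃) (hy_min : ∀ w ∈ W₃, y ≤ w) :
    (x, y, (W₁ ∪ W₂ ∪ W₃) \ {x, y}) ∈ sepDiff (pathGraph n) G := by
  set S := (W₁ ∪ W₂ ∪ W₃) \ {x, y}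
  simp only [subset_iff, mem_Iic, mem_Ioo, mem_Ici] at h₁ h₂ h₃
  obtain ⟨c, hc⟩ := hW₂
  have hxa := h₁ hx
  have hby := h₃ hy
  have hac := h₂ hc
  have hxS : x ∉ S := by simp [S]
  have hyS : y ∉ S := by simp [S]
  have hcS : c ∈ S := by
    simp only [S, mem_sdiff, mem_union, mem_insert, mem_singleton]
    exact ⟨Or.inl (Or.inr hc), by rintro (rfl | rfl) <;> grind⟩
  have hP : Separates (pathGraph n) x y S :=
    (separates_pathGraph_iff (by grind) hxS hyS).mpr ⟨c, hcS, by grind, by grind⟩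
  have hG : ¬ Separates G x y S := by
    obtain ⟨p₁, hp₁⟩ := exists_walk_of_forall_adj_succ (G := G) hxa
      fun u v _ hv huv => hpath u v huv (Or.inl hv)
    obtain ⟨p₂, hp₂⟩ := exists_walk_of_forall_adj_succ (G := G) hby
      fun u v hu _ huv => hpath u v huv (Or.inr hu)
    intro hsep
    obtain ⟨w, hw, hwS⟩ := hsep (p₁.append (.cons h p₂))
    simp only [S, mem_sdiff, mem_union, mem_insert, mem_singleton] at hwS
    rw [Walk.mem_support_append_iff, Walk.support_cons, List.mem_cons] at hw
    have := hp₁ w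
    have := hp₂ w
    have := hx_max w
    have := hy_min w
    have := @h₂ w
    grind
  exact mk_mem_sepDiff.mpr ⟨by grind, hxS, hyS, fun hiff => hG (hiff.mp hP)⟩

theorem two_pow_sub_one_le_sepDist_of_long_edge {a b : Fin n} (h : G.Adj a b)
    (hab : a.val + 2 ≤ b.val)
    (hpath : ∀ u v : Fin n, u.val + 1 = v.val → (v ≤ a ∨ b ≤ u) → G.Adj u v) :
    2 ^ (n - 2) - 1 ≤ sepDist (pathGraph n) G := by
  have hmaps : ↑((blockFamilies a b).image (blockTriple a)) ⊆ sepDiff (pathGraph n) G := by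
    simp only [coe_image, Set.image_subset_iff]
    intro W hW
    obtain ⟨h₁, h₂, h₃, hW₁, hW₂, hW₃⟩ := mem_blockFamilies.mp hW
    rw [Set.mem_preimage, blockTriple_eq a hW₁ hW₃]
    exact blockTriple_mem_sepDiff h hpath h₁ h₂ h₃ hW₂ (max'_mem _ _) (le_max' _)
      (min'_mem _ _) (min'_le _)
  calc 2 ^ (n - 2) - 1 = 2 ^ ((a.val + 1) + ((b - a - 1) + (n - b) - 1) - 1) - 1 := by
        congr 2; omega
    _ ≤ (2 ^ (a.val + 1) - 1) * (2 ^ ((b - a - 1) + (n - b) - 1) - 1) :=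
        two_pow_sub_one_le_mul (by omega) (by omega)
    _ ≤ (2 ^ (a.val + 1) - 1) * ((2 ^ (b - a - 1 : ℕ) - 1) * (2 ^ (n - b) - 1)) :=
        Nat.mul_le_mul_left _ (two_pow_sub_one_le_mul (by omega) (by omega))
    _ = ((blockFamilies a b).image (blockTriple a)).card := by
        rw [card_image_of_injOn (injOn_blockTriple (by rw [Fin.lt_def]; omega)),
          card_blockFamilies]
    _ ≤ _ := card_le_sepDist hmaps

theorem eq_pathGraph_of_forall_crossing
    (hcross : ∀ x y : Fin n, x.val + 1 = y.val → ∃ u v, u ≤ x ∧ y ≤ v ∧ G.Adj u v)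
    (hshort : ∀ u v, G.Adj u v → v.val < u.val + 2) : G = pathGraph n := by
  ext u v
  rw [pathGraph_adj]
  constructor
  · intro huv
    have := hshort u v huv
    have := hshort v u huv.symm
    have := huv.ne
    omega
  · have hstep : ∀ x y : Fin n, x.val + 1 = y.val → G.Adj x y := by
      intro x y hxy
      obtain ⟨u, v, hu, hv, huv⟩ := hcross x y hxy
      have := hshort u v huv
      obtain rfl : u = x := by omega
      obtain rfl : v = y := by omega
      exact huv
    rintro (h | h)
    · exact hstep u v h
    · exact (hstep v u h).symm

theorem two_pow_sub_one_le_sepDist (hne : G ≠ pathGraph n) :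
    2 ^ (n - 2) - 1 ≤ sepDist (pathGraph n) G := by
  by_cases hcut : ∃ x y : Fin n, x.val + 1 = y.val ∧ ∀ u v, u ≤ x → y ≤ v → ¬ G.Adj u v
  · obtain ⟨x, y, hxy, hcut⟩ := hcut
    exact (Nat.sub_le _ _).trans (two_pow_le_sepDist_of_cut hxy hcut)
  push Not at hcut
  obtain ⟨a, b, hab, hlong⟩ : ∃ a b, G.Adj a b ∧ a.val + 2 ≤ b.val := by
    by_contra! hshort
    exact hne (eq_pathGraph_of_forall_crossing hcut hshort)
  by_cases hpath : ∀ u v : Fin n, u.val + 1 = v.val → (v ≤ a ∨ b ≤ u) → G.Adj u v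
  · exact two_pow_sub_one_le_sepDist_of_long_edge hab hlong hpath
  push Not at hpath
  obtain ⟨u, v, huv, hside, hnadj⟩ := hpath
  obtain ⟨u', v', hu', hv', hadj'⟩ := hcut u v huv
  have hlong' : u'.val + 2 ≤ v'.val := by
    by_contra
    obtain rfl : u' = u := by omega
    obtain rfl : v' = v := by omega
    exact hnadj hadj'
  refine (Nat.sub_le _ _).trans (two_pow_le_sepDist_of_two_long_edges hab hadj' hlong hlong' ?_)
  rintro ⟨⟩
  omega

end LowerBound

section Extremal

variable {m : ℕ}

def shortcutGraph (m : ℕ) : SimpleGraph (Fin (m + 3)) :=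
  pathGraph (m + 3) ⊔ fromEdgeSet {s(0, 2)}

theorem separates_shortcutGraph {x y z : Fin (m + 3)} {S : Finset (Fin (m + 3))}
    (hz : z ∈ S) (h2z : 2 ≤ z) (hxz : x < z) (hzy : z ≤ y) :
    Separates (shortcutGraph m) x y S := by
  refine separates_of_forall_adj_mem hxz hzy fun u v huv hu hv => ?_
  suffices v = z from this ▸ hz
  rw [shortcutGraph, sup_adj, pathGraph_adj, fromEdgeSet_adj, Set.mem_singleton_iff,
    Sym2.eq_iff] at huv
  have h2 : (2 : Fin (m + 3)).val = 2 := Fin.val_two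
  have h0 : (0 : Fin (m + 3)).val = 0 := Fin.val_zero _
  rcases huv with huv | ⟨⟨rfl, rfl⟩ | ⟨rfl, rfl⟩, -⟩ <;> omega

theorem mem_sepDiff_shortcutGraph {x y : Fin (m + 3)} {S : Finset (Fin (m + 3))}
    (h : (x, y, S) ∈ sepDiff (pathGraph (m + 3)) (shortcutGraph m)) :
    x = 0 ∧ 1 ∈ S ∧ 2 ≤ y ∧ ∀ w ∈ S, w = 1 ∨ y < w := by
  obtain ⟨hxy, hx, hy, hiff⟩ := mk_mem_sepDiff.mp h
  have hsep : Separates (pathGraph (m + 3)) x y S :=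
    by_contra fun hP => hiff (iff_of_false hP fun hG => hP (hG.anti le_sup_left))
  have hfar : ∀ w ∈ S, x < w → w ≤ y → w < 2 := fun w hw hxw hwy =>
    lt_of_not_ge fun h2w => hiff (iff_of_true hsep
      (separates_shortcutGraph hw h2w hxw hwy))
  obtain ⟨z, hz, hxz, hzy⟩ := (separates_pathGraph_iff hxy hx hy).mp hsep
  have h2z := hfar z hz hxz hzy.le
  have h0 : (0 : Fin (m + 3)).val = 0 := Fin.val_zero _
  have h1 : (1 : Fin (m + 3)).val = 1 := Fin.val_one _
  have h2 : (2 : Fin (m + 3)).val = 2 := Fin.val_two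
  obtain rfl : x = 0 := by omega
  obtain rfl : z = 1 := by omega
  refine ⟨rfl, hz, by omega, fun w hw => ?_⟩
  have hw0 : w ≠ 0 := by rintro rfl; exact hx hw
  have hwy : w ≠ y := by rintro rfl; exact hy hw
  by_contra! hw'
  have := hfar w hw (by omega) (by omega)
  omega

theorem sepDist_shortcutGraph_le :
    sepDist (pathGraph (m + 3)) (shortcutGraph m) ≤ 2 ^ (m + 1) - 1 := by
  let g : Fin (m + 3) × Fin (m + 3) × Finset (Fin (m + 3)) → Finset (Fin (m + 3)) :=
    fun t => insert t.2.1 (t.2.2.erase 1)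
  have hmaps : ∀ t ∈ sepDiff (pathGraph (m + 3)) (shortcutGraph m),
      g t ∈ ((Ici 2).powerset.erase ∅ : Finset (Finset (Fin (m + 3)))) := by
    rintro ⟨x, y, S⟩ ht
    obtain ⟨-, -, h2y, hS⟩ := mem_sepDiff_shortcutGraph ht
    simp only [g, mem_erase, mem_powerset, insert_subset_iff, mem_Ici]
    refine ⟨insert_ne_empty _ _, h2y, fun w hw => ?_⟩
    obtain ⟨hw1, hwS⟩ := mem_erase.mp hw
    exact mem_Ici.mpr (h2y.trans ((hS w hwS).resolve_left hw1).le)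
  have hinj : Set.InjOn g (sepDiff (pathGraph (m + 3)) (shortcutGraph m)) := by
    rintro ⟨x, y, S⟩ ht ⟨x', y', S'⟩ ht' hg
    obtain ⟨rfl, h1, -, hS⟩ := mem_sepDiff_shortcutGraph ht
    obtain ⟨rfl, h1', -, hS'⟩ := mem_sepDiff_shortcutGraph ht'
    have hyS : y ∉ S := (mk_mem_sepDiff.mp ht).2.2.1
    have hyS' : y' ∉ S' := (mk_mem_sepDiff.mp ht').2.2.1
    simp only [g] at hg
    have hmin : ∀ {y : Fin (m + 3)} {S : Finset (Fin (m + 3))}, (∀ w ∈ S, w = 1 ∨ y < w) →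
        ∀ w ∈ insert y (S.erase 1), y ≤ w := by
      intro y S hS w hw
      rcases mem_insert.mp hw with rfl | hw
      · exact le_rfl
      · exact ((hS w (mem_of_mem_erase hw)).resolve_left (ne_of_mem_erase hw)).le
    obtain rfl : y = y' := le_antisymm (hmin hS y' (hg ▸ mem_insert_self _ _))
      (hmin hS' y (hg ▸ mem_insert_self _ _))
    have hyS₁ : y ∉ S.erase 1 := fun h => hyS (mem_of_mem_erase h)
    have hyS₁' : y ∉ S'.erase 1 := fun h => hyS' (mem_of_mem_erase h)
    rw [← insert_erase h1, ← insert_erase h1', ← erase_insert hyS₁, ← erase_insert hyS₁', hg]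
  calc _ ≤ ((Ici 2).powerset.erase ∅ : Finset (Finset (Fin (m + 3)))).card := by
        rw [sepDist_eq_ncard_sepDiff, ← Set.ncard_coe_finset]
        exact Set.ncard_le_ncard_of_injOn g hmaps hinj
    _ = 2 ^ (m + 1) - 1 := by
        rw [card_powerset_erase_empty, Fin.card_Ici, Fin.val_two]
        rfl

end Extremal

theorem chain_nearest_neighbor {n : ℕ} (hn : 3 ≤ n) :
    (∀ G' : SimpleGraph (Fin n), G' ≠ SimpleGraph.pathGraph n →
      2 ^ (n - 2) - 1 ≤ sepDist (SimpleGraph.pathGraph n) G') ∧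
    ∃ G' : SimpleGraph (Fin n),
      (∃ e : Sym2 (Fin n), ¬ e.IsDiag ∧ e ∉ (SimpleGraph.pathGraph n).edgeSet ∧
        G' = SimpleGraph.pathGraph n ⊔ SimpleGraph.fromEdgeSet {e}) ∧
      sepDist (SimpleGraph.pathGraph n) G' = 2 ^ (n - 2) - 1 := by
  refine ⟨fun G' hne => two_pow_sub_one_le_sepDist hne, ?_⟩
  obtain ⟨m, rfl⟩ : ∃ m, n = m + 3 := ⟨n - 3, by omega⟩
  have h2 : (2 : Fin (m + 3)).val = 2 := Fin.val_two
  have h0 : (0 : Fin (m + 3)).val = 0 := Fin.val_zero _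
  have hdiag : ¬ s((0 : Fin (m + 3)), 2).IsDiag := by
    rw [Sym2.mk_isDiag_iff]; omega
  have hpath : s((0 : Fin (m + 3)), 2) ∉ (pathGraph (m + 3)).edgeSet := by
    rw [mem_edgeSet, pathGraph_adj]; omega
  have hne : shortcutGraph m ≠ pathGraph (m + 3) := fun h =>
    hpath (h ▸ Or.inr ⟨rfl, by simpa using hdiag⟩)
  exact ⟨shortcutGraph m, ⟨s(0, 2), hdiag, hpath, rfl⟩,
    le_antisymm sepDist_shortcutGraph_le (two_pow_sub_one_le_sepDist hne)⟩
end

section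
/- Let D and D'' be two DAGs with the same path skeleton v1 — v2 — ... — vn (n ≥ 3) that are not Markov equivalent. Then the d-separation distance between D and D'' is at least 2^(n-1) - 2. -/
/-- A directed graph on `Fin n` is a binary relation; it is a DAG when it has no
directed cycle. -/
def IsDAG {n : ℕ} (D : Fin n → Fin n → Prop) : Prop :=
  ∀ v, ¬ Relation.TransGen D v v

/-- The skeleton (underlying undirected graph) of a directed graph. -/
def Skel {n : ℕ} (D : Fin n → Fin n → Prop) : SimpleGraph (Fin n) where
  Adj a b := a ≠ b ∧ (D a b ∨ D b a)
  symm := ⟨fun a b h => ⟨h.1.symm, h.2.symm⟩⟩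
  loopless := ⟨fun a h => h.1 rfl⟩

/-- `y` is a descendant of `x` (including `x` itself). -/
def Desc {n : ℕ} (D : Fin n → Fin n → Prop) (x y : Fin n) : Prop :=
  Relation.ReflTransGen D x y

/-- A path (in the skeleton) from `u` to `v`, as a list of distinct vertices with
consecutive vertices adjacent in the skeleton. -/
def IsSkelPath {n : ℕ} (D : Fin n → Fin n → Prop) (u v : Fin n) (p : List (Fin n)) : Prop :=
  p.Nodup ∧ p.head? = some u ∧ p.getLast? = some v ∧
    p.Chain' (fun a b => D a b ∨ D b a)

/-- Position `i` of the list `p` is a collider: both neighboring arcs point into it. -/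
def ColliderAt {n : ℕ} [NeZero n] (D : Fin n → Fin n → Prop) (p : List (Fin n)) (i : ℕ) : Prop :=
  D (p.getD (i - 1) default) (p.getD i default) ∧ D (p.getD (i + 1) default) (p.getD i default)

/-- The path `p` is blocked by `Z`: some internal position is a non-collider in `Z`,
or a collider none of whose descendants (including itself) lies in `Z`. -/
def Blocked {n : ℕ} [NeZero n] (D : Fin n → Fin n → Prop) (Z : Finset (Fin n))
    (p : List (Fin n)) : Prop :=
  ∃ i : ℕ, 0 < i ∧ i + 1 < p.length ∧
    ((¬ ColliderAt D p i ∧ p.getD i default ∈ Z) ∨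
      (ColliderAt D p i ∧ ∀ w, Desc D (p.getD i default) w → w ∉ Z))

/-- `u` and `v` are d-separated given `Z` in `D`. -/
def DSep {n : ℕ} [NeZero n] (D : Fin n → Fin n → Prop) (u v : Fin n)
    (Z : Finset (Fin n)) : Prop :=
  ∀ p : List (Fin n), IsSkelPath D u v p → Blocked D Z p

/-- The d-separation distance between two directed graphs on `Fin n`: the number of
triples `(u, v, Z)` with `u < v` and `Z ⊆ V \ {u, v}` on which their d-separation
relations differ. -/
noncomputable def dSepDist {n : ℕ} [NeZero n] (D₁ D₂ : Fin n → Fin n → Prop) : ℕ :=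
  Set.ncard {t : Fin n × Fin n × Finset (Fin n) |
    t.1 < t.2.1 ∧ t.1 ∉ t.2.2 ∧ t.2.1 ∉ t.2.2 ∧
    ¬ (DSep D₁ t.1 t.2.1 t.2.2 ↔ DSep D₂ t.1 t.2.1 t.2.2)}

/-- A vertex is a collider (of a DAG with a path skeleton) if it has two distinct
parents. -/
def IsColliderVertex {n : ℕ} (D : Fin n → Fin n → Prop) (k : Fin n) : Prop :=
  ∃ a b, a ≠ b ∧ D a k ∧ D b k

/-- Two directed graphs entail the same d-separation relations. -/
def MarkovEquiv {n : ℕ} [NeZero n] (D₁ D₂ : Fin n → Fin n → Prop) : Prop :=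
  ∀ (u v : Fin n) (Z : Finset (Fin n)), u ≠ v → u ∉ Z → v ∉ Z →
    (DSep D₁ u v Z ↔ DSep D₂ u v Z)

/-!
On a path skeleton every skeleton path from `a` to `b > a` runs through all vertices strictly
between them, and a collider has no children. Hence `a` and `b` are d-connected given `Z` iff
`Z` contains exactly the colliders strictly between them. If `c` is a collider in exactly one of
`D`, `D''`, then for all `a < c < b` and every `W` outside `[a, b]`, the set
`W ∪ {colliders of D strictly between a and b}` d-connects `a` and `b` in `D` but not in `D''`,
and symmetrically with the roles of `D` and `D''` exchanged. These `2 (2^c - 1) (2^(n-1-c) - 1)`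
triples are distinct (vertices numbered from `0`), and `1 ≤ c ≤ n - 2` makes this at least
`2^(n-1) - 2`.
-/

open Finset

section Colliders

variable {n : ℕ} {D : Fin n → Fin n → Prop}

lemma IsDAG.irrefl (hD : IsDAG D) (a : Fin n) : ¬ D a a :=
  fun h => hD a (.single h)

lemma IsDAG.asymm (hD : IsDAG D) {a b : Fin n} (hab : D a b) : ¬ D b a :=
  fun hba => hD a (.head hab (.single hba))

lemma val_adjacent_of_arc (hD : IsDAG D) (hs : Skel D = SimpleGraph.pathGraph n) {a b : Fin n}
    (h : D a b ∨ D b a) : (a : ℕ) + 1 = b ∨ (b : ℕ) + 1 = a := by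
  have hadj : (Skel D).Adj a b := ⟨by rintro rfl; exact h.elim (hD.irrefl a) (hD.irrefl a), h⟩
  rwa [hs, SimpleGraph.pathGraph_adj] at hadj

lemma arc_of_val_succ_eq (hs : Skel D = SimpleGraph.pathGraph n) {a b : Fin n}
    (h : (a : ℕ) + 1 = b) : D a b ∨ D b a := by
  have hadj : (SimpleGraph.pathGraph n).Adj a b := SimpleGraph.pathGraph_adj.mpr (Or.inl h)
  rw [← hs] at hadj
  exact hadj.2

lemma isColliderVertex_iff_of_ne (hD : IsDAG D) (hs : Skel D = SimpleGraph.pathGraph n)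
    {x y k : Fin n} (hxy : x ≠ y) (hx : D x k ∨ D k x) (hy : D y k ∨ D k y) :
    IsColliderVertex D k ↔ D x k ∧ D y k := by
  refine ⟨fun ⟨a, b, hab, ha, hb⟩ => ?_, fun h => ⟨x, y, hxy, h⟩⟩
  have := val_adjacent_of_arc hD hs hx
  have := val_adjacent_of_arc hD hs hy
  have := val_adjacent_of_arc hD hs (Or.inl ha)
  have := val_adjacent_of_arc hD hs (Or.inl hb)
  rw [Ne, Fin.ext_iff] at hxy hab
  rcases (show (a = x ∧ b = y) ∨ (a = y ∧ b = x) by simp only [Fin.ext_iff]; omega)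
    with ⟨rfl, rfl⟩ | ⟨rfl, rfl⟩
  exacts [⟨ha, hb⟩, ⟨hb, ha⟩]

lemma IsColliderVertex.val_pos_and_succ_lt (hD : IsDAG D) (hs : Skel D = SimpleGraph.pathGraph n)
    {k : Fin n} (hk : IsColliderVertex D k) : 0 < (k : ℕ) ∧ (k : ℕ) + 1 < n := by
  obtain ⟨a, b, hab, ha, hb⟩ := hk
  have := val_adjacent_of_arc hD hs (Or.inl ha)
  have := val_adjacent_of_arc hD hs (Or.inl hb)
  rw [Ne, Fin.ext_iff] at hab
  omega

lemma IsColliderVertex.not_arc (hD : IsDAG D) (hs : Skel D = SimpleGraph.pathGraph n)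
    {k : Fin n} (hk : IsColliderVertex D k) (w : Fin n) : ¬ D k w := by
  obtain ⟨a, b, hab, ha, hb⟩ := hk
  intro hw
  have := val_adjacent_of_arc hD hs (Or.inl ha)
  have := val_adjacent_of_arc hD hs (Or.inl hb)
  have := val_adjacent_of_arc hD hs (Or.inr hw)
  rw [Ne, Fin.ext_iff] at hab
  rcases (show w = a ∨ w = b by simp only [Fin.ext_iff]; omega) with rfl | rfl
  exacts [hD.asymm ha hw, hD.asymm hb hw]

lemma IsColliderVertex.forall_desc_not_mem_iff (hD : IsDAG D)
    (hs : Skel D = SimpleGraph.pathGraph n) {k : Fin n} (hk : IsColliderVertex D k)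
    (Z : Finset (Fin n)) : (∀ w, Desc D k w → w ∉ Z) ↔ k ∉ Z := by
  refine ⟨fun h => h k .refl, fun hkZ w hw => ?_⟩
  rcases hw.cases_head with rfl | ⟨x, hx, -⟩
  exacts [hkZ, absurd hx (hk.not_arc hD hs x)]

end Colliders

section SkeletonPaths

variable {n : ℕ} {D : Fin n → Fin n → Prop} {u v : Fin n} {p : List (Fin n)}

lemma IsSkelPath.reverse (hp : IsSkelPath D u v p) : IsSkelPath D v u p.reverse := by
  obtain ⟨hnd, hu, hv, hch⟩ := hp
  refine ⟨List.nodup_reverse.mpr hnd, ?_, ?_,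
    List.isChain_reverse.mpr (hch.imp fun _ _ => Or.symm)⟩
  · rwa [List.head?_reverse]
  · rwa [List.getLast?_reverse]

lemma mem_of_isChain_val_adjacent
    (hp : p.IsChain fun a b : Fin n => (a : ℕ) + 1 = b ∨ (b : ℕ) + 1 = a) {k : Fin n}
    (hu : p.head? = some u) (hv : p.getLast? = some v) (huk : u ≤ k) (hkv : k ≤ v) :
    k ∈ p := by
  induction p generalizing u with
  | nil => simp at hu
  | cons x q ih =>
    obtain rfl : x = u := by simpa using hu
    rcases eq_or_ne k x with rfl | hkx
    · exact List.mem_cons_self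
    cases q with
    | nil =>
      obtain rfl : x = v := by simpa using hv
      exact absurd (le_antisymm hkv huk) hkx
    | cons y r =>
      have hxy := (List.isChain_cons_cons.mp hp).1
      have hxk : (x : ℕ) < k := Fin.lt_def.mp (lt_of_le_of_ne huk hkx.symm)
      refine List.mem_cons_of_mem _ (ih (List.isChain_cons_cons.mp hp).2 rfl ?_ ?_)
      · rwa [List.getLast?_cons_cons] at hv
      · rw [Fin.le_def]; omega

lemma exists_isSkelPath_subset_Icc (hs : Skel D = SimpleGraph.pathGraph n) (huv : u ≤ v) :
    ∃ p, IsSkelPath D u v p ∧ ∀ k ∈ p, u ≤ k ∧ k ≤ v := by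
  rw [Fin.le_def] at huv
  refine ⟨List.ofFn fun i : Fin (v - u + 1) => ⟨u + i, by omega⟩, ⟨?_, ?_, ?_, ?_⟩, ?_⟩
  · exact List.nodup_ofFn.mpr fun i j h => Fin.ext (by simpa using h)
  · simp [List.head?_eq_getElem?]
  · rw [List.getLast?_eq_getElem?, List.getElem?_eq_getElem (by simp)]
    simp only [List.length_ofFn, List.getElem_ofFn, Option.some.injEq]
    ext; simp only; omega
  · exact List.isChain_ofFn.mpr fun i hi => arc_of_val_succ_eq hs (by simp; omega)
  · simp only [List.mem_ofFn, forall_exists_index]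
    rintro _ i rfl
    simp only [Fin.le_def]
    omega

variable [NeZero n]

lemma IsSkelPath.exists_interior_index_iff (hp : IsSkelPath D u v p) (P : Fin n → Prop) :
    (∃ i, 0 < i ∧ i + 1 < p.length ∧ P (p.getD i default)) ↔
      ∃ k ∈ p, k ≠ u ∧ k ≠ v ∧ P k := by
  obtain ⟨hnd, hu, hv, -⟩ := hp
  have hlen : 0 < p.length := List.length_pos_iff.mpr (by rintro rfl; simp at hu)
  have hu : p[0] = u := by simpa [List.head?_eq_getElem?, List.getElem?_eq_getElem hlen] using hu
  have hv : p[p.length - 1] = v := by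
    simpa [List.getLast?_eq_getElem?, List.getElem?_eq_getElem (Nat.sub_lt hlen one_pos)] using hv
  constructor
  · rintro ⟨i, hi, hil, hP⟩
    rw [List.getD_eq_getElem _ _ (by omega)] at hP
    refine ⟨p[i], List.getElem_mem _, ?_, ?_, hP⟩
    · rw [← hu, Ne, hnd.getElem_inj_iff]; omega
    · rw [← hv, Ne, hnd.getElem_inj_iff]; omega
  · rintro ⟨k, hk, hku, hkv, hP⟩
    obtain ⟨i, hi, rfl⟩ := List.mem_iff_getElem.mp hk
    rw [← hu, Ne, hnd.getElem_inj_iff] at hku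
    rw [← hv, Ne, hnd.getElem_inj_iff] at hkv
    exact ⟨i, by omega, by omega, by rwa [List.getD_eq_getElem]⟩

lemma IsSkelPath.colliderAt_iff (hD : IsDAG D) (hs : Skel D = SimpleGraph.pathGraph n)
    (hp : IsSkelPath D u v p) {i : ℕ} (hi : 0 < i) (hil : i + 1 < p.length) :
    ColliderAt D p i ↔ IsColliderVertex D (p.getD i default) := by
  obtain ⟨hnd, -, -, hch⟩ := hp
  have hch := List.isChain_iff_getElem.mp hch
  have hprev : D p[i - 1] p[i] ∨ D p[i] p[i - 1] := by
    have := hch (i - 1) (by omega)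
    simp only [Nat.sub_add_cancel hi] at this
    exact this
  have hnext : D p[i + 1] p[i] ∨ D p[i] p[i + 1] := (hch i hil).symm
  have hne : p[i - 1] ≠ p[i + 1] := by rw [Ne, hnd.getElem_inj_iff]; omega
  rw [ColliderAt, List.getD_eq_getElem _ _ (by omega), List.getD_eq_getElem _ _ (by omega),
    List.getD_eq_getElem _ _ hil, isColliderVertex_iff_of_ne hD hs hne hprev hnext]

lemma IsSkelPath.blocked_iff (hD : IsDAG D) (hs : Skel D = SimpleGraph.pathGraph n)
    (hp : IsSkelPath D u v p) (Z : Finset (Fin n)) :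
    Blocked D Z p ↔
      ∃ k ∈ p, k ≠ u ∧ k ≠ v ∧ ¬ (IsColliderVertex D k ↔ k ∈ Z) := by
  rw [← hp.exists_interior_index_iff]
  refine exists_congr fun i => and_congr_right fun hi => and_congr_right fun hil => ?_
  rw [hp.colliderAt_iff hD hs hi hil]
  generalize p.getD i default = k
  by_cases hk : IsColliderVertex D k
  · rw [hk.forall_desc_not_mem_iff hD hs]; tauto
  · tauto

lemma DSep.symm (hD : IsDAG D) (hs : Skel D = SimpleGraph.pathGraph n) {Z : Finset (Fin n)}
    (h : DSep D u v Z) : DSep D v u Z := by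
  intro p hp
  obtain ⟨k, hk, hku, hkv, hkZ⟩ := (hp.reverse.blocked_iff hD hs Z).mp (h _ hp.reverse)
  exact (hp.blocked_iff hD hs Z).mpr ⟨k, List.mem_reverse.mp hk, hkv, hku, hkZ⟩

lemma dSep_comm (hD : IsDAG D) (hs : Skel D = SimpleGraph.pathGraph n) {Z : Finset (Fin n)} :
    DSep D u v Z ↔ DSep D v u Z :=
  ⟨DSep.symm hD hs, DSep.symm hD hs⟩

end SkeletonPaths

section DSeparation

variable {n : ℕ} [NeZero n] {D D' : Fin n → Fin n → Prop}

theorem dSep_iff (hD : IsDAG D) (hs : Skel D = SimpleGraph.pathGraph n) {u v : Fin n}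
    (huv : u < v) (Z : Finset (Fin n)) :
    DSep D u v Z ↔ ∃ k, u < k ∧ k < v ∧ ¬ (IsColliderVertex D k ↔ k ∈ Z) := by
  constructor
  · intro h
    obtain ⟨p, hp, hpIcc⟩ := exists_isSkelPath_subset_Icc hs huv.le
    obtain ⟨k, hk, hku, hkv, hkZ⟩ := (hp.blocked_iff hD hs Z).mp (h p hp)
    exact ⟨k, (hpIcc k hk).1.lt_of_ne hku.symm, (hpIcc k hk).2.lt_of_ne hkv, hkZ⟩
  · rintro ⟨k, huk, hkv, hkZ⟩ p hp
    have hch : p.IsChain fun a b : Fin n => (a : ℕ) + 1 = b ∨ (b : ℕ) + 1 = a :=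
      hp.2.2.2.imp fun _ _ => val_adjacent_of_arc hD hs
    have hk : k ∈ p := mem_of_isChain_val_adjacent hch hp.2.1 hp.2.2.1 huk.le hkv.le
    exact (hp.blocked_iff hD hs Z).mpr ⟨k, hk, huk.ne', hkv.ne, hkZ⟩

theorem markovEquiv_of_forall_isColliderVertex_iff (hD : IsDAG D)
    (hs : Skel D = SimpleGraph.pathGraph n) (hD' : IsDAG D')
    (hs' : Skel D' = SimpleGraph.pathGraph n)
    (h : ∀ k, IsColliderVertex D k ↔ IsColliderVertex D' k) : MarkovEquiv D D' := by
  have hlt : ∀ u v Z, u < v → (DSep D u v Z ↔ DSep D' u v Z) := fun u v Z huv => by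
    simp only [dSep_iff hD hs huv, dSep_iff hD' hs' huv, h]
  intro u v Z huv _ _
  rcases huv.lt_or_gt with huv | hvu
  · exact hlt u v Z huv
  · rw [dSep_comm hD hs, dSep_comm hD' hs']
    exact hlt v u Z hvu

end DSeparation

lemma sum_Iio_two_pow {n : ℕ} (c : Fin n) :
    ∑ a ∈ Iio c, 2 ^ (a : ℕ) = 2 ^ (c : ℕ) - 1 := by
  have hgeom := Nat.geomSum_eq le_rfl (c : ℕ)
  rw [Nat.add_one_sub_one, Nat.div_one] at hgeom
  rw [← hgeom, ← Nat.Iio_eq_range, ← Fin.map_valEmbedding_Iio, sum_map]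
  rfl

lemma sum_Ioi_two_pow_rev {n : ℕ} (c : Fin n) :
    ∑ b ∈ Ioi c, 2 ^ (b.rev : ℕ) = 2 ^ (c.rev : ℕ) - 1 := by
  rw [← sum_Iio_two_pow, ← Fin.map_revPerm_Ioi, sum_map]
  rfl

lemma two_pow_add_sub_two_le {k m : ℕ} (hk : k ≠ 0) (hm : m ≠ 0) :
    2 ^ (k + m) - 2 ≤ 2 * ((2 ^ k - 1) * (2 ^ m - 1)) := by
  obtain ⟨x, hx⟩ : ∃ x, 2 ^ k = x + 2 := Nat.exists_eq_add_of_le' (Nat.le_self_pow hk 2)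
  obtain ⟨y, hy⟩ : ∃ y, 2 ^ m = y + 2 := Nat.exists_eq_add_of_le' (Nat.le_self_pow hm 2)
  rw [pow_add, hx, hy]
  show (x + 2) * (y + 2) - 2 ≤ 2 * ((x + 1) * (y + 1))
  exact Nat.sub_le_iff_le_add.mpr (by nlinarith)

section Counting

variable {n : ℕ} {D D' : Fin n → Fin n → Prop}

open Classical in
noncomputable def colliderSet (D : Fin n → Fin n → Prop) (a b : Fin n) : Finset (Fin n) :=
  {k | a < k ∧ k < b ∧ IsColliderVertex D k}

lemma mem_union_colliderSet_iff {a b k : Fin n} {W : Finset (Fin n)} (hW : W ⊆ (Icc a b)ᶜ)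
    (hak : a < k) (hkb : k < b) : k ∈ W ∪ colliderSet D a b ↔ IsColliderVertex D k := by
  have hkW : k ∉ W := fun hk => mem_compl.mp (hW hk) (mem_Icc.mpr ⟨hak.le, hkb.le⟩)
  simp [colliderSet, hkW, hak, hkb]

lemma mem_union_colliderSet_iff_of_notMem_Ioo {a b k : Fin n} {W : Finset (Fin n)}
    (hk : k ∉ Ioo a b) : k ∈ W ∪ colliderSet D a b ↔ k ∈ W := by
  simp only [mem_Ioo] at hk
  simp only [colliderSet, mem_union, mem_filter, mem_univ, true_and]
  tauto

def witnesses (c : Fin n) : Finset ((_ : Fin n × Fin n) × Finset (Fin n)) :=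
  (Iio c ×ˢ Ioi c).sigma fun q => (Icc q.1 q.2)ᶜ.powerset

noncomputable def connectingTriple (D : Fin n → Fin n → Prop)
    (x : (_ : Fin n × Fin n) × Finset (Fin n)) : Fin n × Fin n × Finset (Fin n) :=
  (x.1.1, x.1.2, x.2 ∪ colliderSet D x.1.1 x.1.2)

lemma mem_witnesses {c a b : Fin n} {W : Finset (Fin n)} :
    ⟨(a, b), W⟩ ∈ witnesses c ↔ a < c ∧ c < b ∧ W ⊆ (Icc a b)ᶜ := by
  simp [witnesses, and_assoc]

lemma card_witnesses (c : Fin n) :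
    #(witnesses c) = (2 ^ (c : ℕ) - 1) * (2 ^ (c.rev : ℕ) - 1) := by
  rw [witnesses, card_sigma, ← sum_Iio_two_pow, ← sum_Ioi_two_pow_rev, sum_mul_sum, sum_product]
  refine sum_congr rfl fun a ha => sum_congr rfl fun b hb => ?_
  have hab : (a : ℕ) < b := (Fin.lt_def.mp (mem_Iio.mp ha)).trans (Fin.lt_def.mp (mem_Ioi.mp hb))
  rw [card_powerset, card_compl, Fintype.card_fin, Fin.card_Icc, ← pow_add, Fin.val_rev]
  have hbn := b.isLt
  congr 1
  dsimp only
  omega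

lemma connectingTriple_injOn (c : Fin n) :
    Set.InjOn (connectingTriple D) (witnesses c) := by
  rintro ⟨⟨a, b⟩, W⟩ hx ⟨⟨a', b'⟩, W'⟩ hx' h
  simp only [connectingTriple, Prod.mk.injEq] at h
  obtain ⟨rfl, rfl, hZ⟩ := h
  have hW := (mem_witnesses.mp hx).2.2
  have hW' := (mem_witnesses.mp hx').2.2
  suffices W = W' by rw [this]
  ext k
  by_cases hk : k ∈ Icc a b
  · exact iff_of_false (fun h => mem_compl.mp (hW h) hk) (fun h => mem_compl.mp (hW' h) hk)
  · have hk' : k ∉ Ioo a b := fun h => hk (Ioo_subset_Icc_self h)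
    rw [← mem_union_colliderSet_iff_of_notMem_Ioo (D := D) hk', hZ,
      mem_union_colliderSet_iff_of_notMem_Ioo hk']

lemma disjoint_image_connectingTriple {c : Fin n}
    (hc : ¬ (IsColliderVertex D c ↔ IsColliderVertex D' c)) :
    Disjoint ((witnesses c).image (connectingTriple D))
      ((witnesses c).image (connectingTriple D')) := by
  simp only [disjoint_left, mem_image, not_exists, not_and]
  rintro _ ⟨⟨⟨a, b⟩, W⟩, hx, rfl⟩ ⟨⟨a', b'⟩, W'⟩ hx' h
  simp only [connectingTriple, Prod.mk.injEq] at h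
  obtain ⟨rfl, rfl, hZ⟩ := h
  obtain ⟨hac, hcb, hW⟩ := mem_witnesses.mp hx
  refine hc ?_
  rw [← mem_union_colliderSet_iff hW hac hcb, ← hZ,
    mem_union_colliderSet_iff (mem_witnesses.mp hx').2.2 hac hcb]

variable [NeZero n]

lemma connectingTriple_spec (hD : IsDAG D) (hs : Skel D = SimpleGraph.pathGraph n)
    (hD' : IsDAG D') (hs' : Skel D' = SimpleGraph.pathGraph n) {c a b : Fin n}
    (hc : ¬ (IsColliderVertex D c ↔ IsColliderVertex D' c)) {W : Finset (Fin n)}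
    (hx : ⟨(a, b), W⟩ ∈ witnesses c) :
    a < b ∧ a ∉ W ∪ colliderSet D a b ∧ b ∉ W ∪ colliderSet D a b ∧
      ¬ DSep D a b (W ∪ colliderSet D a b) ∧ DSep D' a b (W ∪ colliderSet D a b) := by
  obtain ⟨hac, hcb, hW⟩ := mem_witnesses.mp hx
  have hab := hac.trans hcb
  refine ⟨hab, ?_, ?_, ?_, ?_⟩
  · rw [mem_union_colliderSet_iff_of_notMem_Ioo left_notMem_Ioo]
    exact fun ha => mem_compl.mp (hW ha) (left_mem_Icc.mpr hab.le)
  · rw [mem_union_colliderSet_iff_of_notMem_Ioo right_notMem_Ioo]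
    exact fun hb => mem_compl.mp (hW hb) (right_mem_Icc.mpr hab.le)
  · rw [dSep_iff hD hs hab]
    rintro ⟨k, hak, hkb, hk⟩
    exact hk (mem_union_colliderSet_iff hW hak hkb).symm
  · rw [dSep_iff hD' hs' hab]
    exact ⟨c, hac, hcb, fun h => hc (by rw [h, mem_union_colliderSet_iff hW hac hcb])⟩

lemma card_le_dSepDist {s : Finset (Fin n × Fin n × Finset (Fin n))}
    (hs : ∀ t ∈ s, t.1 < t.2.1 ∧ t.1 ∉ t.2.2 ∧ t.2.1 ∉ t.2.2 ∧
      ¬ (DSep D t.1 t.2.1 t.2.2 ↔ DSep D' t.1 t.2.1 t.2.2)) :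
    #s ≤ dSepDist D D' := by
  rw [dSepDist, ← Set.ncard_coe_finset]
  exact Set.ncard_le_ncard hs

lemma two_mul_card_witnesses_le_dSepDist (hD : IsDAG D) (hs : Skel D = SimpleGraph.pathGraph n)
    (hD' : IsDAG D') (hs' : Skel D' = SimpleGraph.pathGraph n) {c : Fin n}
    (hc : ¬ (IsColliderVertex D c ↔ IsColliderVertex D' c)) :
    2 * #(witnesses c) ≤ dSepDist D D' := by
  have hcard : 2 * #(witnesses c) = #((witnesses c).image (connectingTriple D) ∪
      (witnesses c).image (connectingTriple D')) := by
    rw [card_union_of_disjoint (disjoint_image_connectingTriple hc),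
      card_image_of_injOn (connectingTriple_injOn c),
      card_image_of_injOn (connectingTriple_injOn c), two_mul]
  rw [hcard]
  refine card_le_dSepDist ?_
  simp only [mem_union, mem_image]
  rintro _ (⟨⟨⟨a, b⟩, W⟩, hx, rfl⟩ | ⟨⟨⟨a, b⟩, W⟩, hx, rfl⟩)
  · obtain ⟨hab, ha, hb, hsep, hsep'⟩ := connectingTriple_spec hD hs hD' hs' hc hx
    exact ⟨hab, ha, hb, fun h => hsep (h.mpr hsep')⟩
  · obtain ⟨hab, ha, hb, hsep, hsep'⟩ :=
      connectingTriple_spec hD' hs' hD hs (fun h => hc h.symm) hx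
    exact ⟨hab, ha, hb, fun h => hsep (h.mp hsep')⟩

end Counting

theorem same_path_skeleton_not_equiv_far_general {n : ℕ} [NeZero n]
    (D D'' : Fin n → Fin n → Prop) (hD : IsDAG D) (hD'' : IsDAG D'')
    (hs : Skel D = SimpleGraph.pathGraph n) (hs'' : Skel D'' = SimpleGraph.pathGraph n)
    (hne : ¬ MarkovEquiv D D'') :
    2 ^ (n - 1) - 2 ≤ dSepDist D D'' := by
  obtain ⟨c, hc⟩ : ∃ c, ¬ (IsColliderVertex D c ↔ IsColliderVertex D'' c) := by
    by_contra! h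
    exact hne (markovEquiv_of_forall_isColliderVertex_iff hD hs hD'' hs'' h)
  have hc_interior : 0 < (c : ℕ) ∧ (c : ℕ) + 1 < n := by
    by_cases h : IsColliderVertex D c
    · exact h.val_pos_and_succ_lt hD hs
    · exact ((not_iff.mp hc).mp h).val_pos_and_succ_lt hD'' hs''
  have hn : n - 1 = c + c.rev := by rw [Fin.val_rev]; omega
  calc 2 ^ (n - 1) - 2 ≤ 2 * ((2 ^ (c : ℕ) - 1) * (2 ^ (c.rev : ℕ) - 1)) := by
        rw [hn]
        exact two_pow_add_sub_two_le (by omega) (by rw [Fin.val_rev]; omega)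
    _ = 2 * #(witnesses c) := by rw [card_witnesses]
    _ ≤ dSepDist D D'' := two_mul_card_witnesses_le_dSepDist hD hs hD'' hs'' hc

theorem same_path_skeleton_not_equiv_far {n : ℕ} [NeZero n] (hn : 3 ≤ n)
    (D D'' : Fin n → Fin n → Prop) (hD : IsDAG D) (hD'' : IsDAG D'')
    (hs : Skel D = SimpleGraph.pathGraph n) (hs'' : Skel D'' = SimpleGraph.pathGraph n)
    (hne : ¬ MarkovEquiv D D'') :
    2 ^ (n - 1) - 2 ≤ dSepDist D D'' :=
  same_path_skeleton_not_equiv_far_general D D'' hD hD'' hs hs'' hne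
end
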